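/- If the edge reconnecting Markov chain is started from an edge stationary distribution on A_n^m, then the distribution at every later time T is also edge stationary. -/
import Mathlib


open Finset Nat

/-- The number of balls of color `i` in the urn configuration `ψ`. -/
def colorCount {M n : ℕ} (ψ : Fin M → Fin n) (i : Fin n) : ℕ :=
  (Finset.univ.filter fun l => ψ l = i).card

/-- The adjacency matrix obtained from `ψ : [2m] → [n]` by the stub-pairing map. -/
def stubAdj {m n : ℕ} (ψ : Fin (2 * m) → Fin n) (i j : Fin n) : ℕ :=
  ∑ e : Fin m,
    ((if ψ ⟨2 * (e : ℕ), by have := e.isLt; omega⟩ = i ∧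
         ψ ⟨2 * (e : ℕ) + 1, by have := e.isLt; omega⟩ = j then 1 else 0) +
     (if ψ ⟨2 * (e : ℕ), by have := e.isLt; omega⟩ = j ∧
         ψ ⟨2 * (e : ℕ) + 1, by have := e.isLt; omega⟩ = i then 1 else 0))

/-- The degree `d(B,i) = ∑_j B(i,j)`. -/
def degB {n : ℕ} (B : Fin n → Fin n → ℕ) (i : Fin n) : ℕ := ∑ j, B i j

/-- The adjacency matrix of a single edge `{i,j}`. -/
def edgeMat {n : ℕ} (i j x y : Fin n) : ℕ :=
  (if x = i ∧ y = j then 1 else 0) + (if x = j ∧ y = i then 1 else 0)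

/-- Reconnecting an edge `{a,b}` of `B`: endpoint `b` is reattached to `v`. -/
def reconnect {n : ℕ} (B : Fin n → Fin n → ℕ) (a b v : Fin n) (x y : Fin n) : ℕ :=
  B x y - edgeMat a b x y + edgeMat a v x y

/-- The transition probability of the edge reconnecting Markov chain with parameter `κ`. -/
noncomputable def reconnectKernel (κ : ℝ) (n m : ℕ)
    (B B' : Fin n → Fin n → ℕ) : ℝ :=
  ∑ a : Fin n, ∑ b : Fin n, ∑ v : Fin n,
    ((B a b : ℝ) / (2 * m)) * (((degB B v : ℝ) + κ) / (2 * m + n * κ)) *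
      (if B' = reconnect B a b v then 1 else 0)

/-- The state space `A_n^m`, realized as the image of the stub-pairing map. -/
def stateSpace (n m : ℕ) : Finset (Fin n → Fin n → ℕ) :=
  Finset.image (fun ψ : Fin (2 * m) → Fin n => fun i j => stubAdj ψ i j) Finset.univ

/-- A distribution `p` on `A_n^m` is edge stationary if conditioned on the degree
sequence it equals the configuration model (the uniform stub matching): for `B ∈ A_n^m`,
`p(B) · #{ψ : type(ψ) = deg(B)} = #{ψ : stubAdj(ψ) = B} · P_p(deg = deg(B))`. -/
def edgeStationary (n m : ℕ) (p : (Fin n → Fin n → ℕ) → ℝ) : Prop :=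
  ∀ B ∈ stateSpace n m,
    p B * ((Finset.univ.filter
        (fun ψ : Fin (2 * m) → Fin n => ∀ i, colorCount ψ i = degB B i)).card : ℝ) =
    ((Finset.univ.filter
        (fun ψ : Fin (2 * m) → Fin n =>
          (fun i j => stubAdj ψ i j) = B)).card : ℝ) *
      (∑ B' ∈ (stateSpace n m).filter (fun B' => ∀ i, degB B' i = degB B i), p B')

namespace ER

variable {n m : ℕ}

abbrev Psi (n m : ℕ) := Fin (2 * m) → Fin n

def stub (m : ℕ) (e : Fin m) (j : Fin 2) : Fin (2 * m) :=
  ⟨2 * e + j, by have := e.isLt; have := j.isLt; omega⟩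

def stubEquiv (m : ℕ) : Fin m × Fin 2 ≃ Fin (2 * m) where
  toFun p := stub m p.1 p.2
  invFun l := (⟨l.val / 2, by have := l.isLt; omega⟩, ⟨l.val % 2, by omega⟩)
  left_inv := by
    rintro ⟨e, j⟩
    have hj := j.isLt
    ext 
    · simp [stub]; omega
    · simp [stub]; omega
  right_inv := by
    intro l
    have := l.isLt
    ext
    simp [stub]; omega

lemma sum2 {M : Type*} [AddCommMonoid M] (h : Fin (2 * m) → M) :
    ∑ l, h l = ∑ e : Fin m, (h (stub m e 0) + h (stub m e 1)) := by
  rw [← Equiv.sum_comp (stubEquiv m) h, Fintype.sum_prod_type]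
  refine Finset.sum_congr rfl fun e _ => ?_
  rw [Fin.sum_univ_two]
  rfl

lemma stub0 (e : Fin m) : stub m e 0 = ⟨2 * (e : ℕ), by have := e.isLt; omega⟩ := rfl

lemma stub1 (e : Fin m) : stub m e 1 = ⟨2 * (e : ℕ) + 1, by have := e.isLt; omega⟩ := rfl

lemma stubAdj_eq (ψ : Psi n m) (i j : Fin n) :
    stubAdj ψ i j = ∑ e : Fin m,
      ((if ψ (stub m e 0) = i ∧ ψ (stub m e 1) = j then 1 else 0) +
       (if ψ (stub m e 0) = j ∧ ψ (stub m e 1) = i then 1 else 0)) := by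
  unfold stubAdj
  refine Finset.sum_congr rfl fun e _ => by rw [stub0, stub1]

lemma colorCount_eq (ψ : Psi n m) (i : Fin n) :
    colorCount ψ i = ∑ l, (if ψ l = i then 1 else 0) := by
  rw [colorCount, Finset.card_filter]

lemma degB_stubAdj (ψ : Psi n m) (i : Fin n) :
    degB (fun x y => stubAdj ψ x y) i = colorCount ψ i := by
  unfold degB
  rw [colorCount_eq, sum2 (fun l => if ψ l = i then 1 else 0)]
  simp only [stubAdj_eq]
  rw [Finset.sum_comm]
  refine Finset.sum_congr rfl fun e _ => ?_
  rw [Finset.sum_add_distrib]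
  simp [ite_and]

def flip2 : Fin 2 → Fin 2 := fun j => ⟨1 - j, by omega⟩

def other (l : Fin (2 * m)) : Fin (2 * m) :=
  stubEquiv m (((stubEquiv m).symm l).1, flip2 ((stubEquiv m).symm l).2)

lemma other_stub0 (e : Fin m) : other (stub m e 0) = stub m e 1 := by
  unfold other
  rw [show stub m e 0 = stubEquiv m (e, 0) from rfl, Equiv.symm_apply_apply]
  rfl

lemma other_stub1 (e : Fin m) : other (stub m e 1) = stub m e 0 := by
  unfold other
  rw [show stub m e 1 = stubEquiv m (e, 1) from rfl, Equiv.symm_apply_apply]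
  rfl

lemma stubAdj_eq_card (ψ : Psi n m) (a b : Fin n) :
    stubAdj ψ a b
      = (Finset.univ.filter fun l => ψ (other l) = a ∧ ψ l = b).card := by
  rw [Finset.card_filter, sum2 (fun l => if ψ (other l) = a ∧ ψ l = b then 1 else 0),
    stubAdj_eq]
  refine Finset.sum_congr rfl fun e _ => ?_
  rw [other_stub0, other_stub1, add_comm]
  congr 1
  exact if_congr (by tauto) rfl rfl

lemma sum_stubAdj_mul (ψ : Psi n m) (G : Fin n → Fin n → ℝ) :
    ∑ a, ∑ b, (stubAdj ψ a b : ℝ) * G a b = ∑ l, G (ψ (other l)) (ψ l) := by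
  have key : ∀ l : Fin (2 * m), G (ψ (other l)) (ψ l)
      = ∑ a, ∑ b, (if ψ (other l) = a ∧ ψ l = b then G a b else 0) := by
    intro l
    simp [ite_and]
  have h2 : (∑ l, G (ψ (other l)) (ψ l))
      = ∑ l : Fin (2 * m), ∑ a, ∑ b, (if ψ (other l) = a ∧ ψ l = b then G a b else 0) :=
    Finset.sum_congr rfl fun l _ => key l
  rw [h2]
  rw [show (∑ l : Fin (2 * m), ∑ a, ∑ b, (if ψ (other l) = a ∧ ψ l = b then G a b else 0))
      = ∑ a, ∑ l : Fin (2 * m), ∑ b, (if ψ (other l) = a ∧ ψ l = b then G a b else 0)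
    from Finset.sum_comm]
  refine Finset.sum_congr rfl fun a _ => ?_
  rw [show (∑ l : Fin (2 * m), ∑ b, (if ψ (other l) = a ∧ ψ l = b then G a b else 0))
      = ∑ b, ∑ l : Fin (2 * m), (if ψ (other l) = a ∧ ψ l = b then G a b else 0)
    from Finset.sum_comm]
  refine Finset.sum_congr rfl fun b _ => ?_
  rw [stubAdj_eq_card, Finset.card_filter]
  push_cast
  rw [Finset.sum_mul]
  refine Finset.sum_congr rfl fun l _ => ?_
  split_ifs <;> simp

lemma stub_ne {e1 e2 : Fin m} {j1 j2 : Fin 2} (h : (e1, j1) ≠ (e2, j2)) :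
    stub m e1 j1 ≠ stub m e2 j2 :=
  fun hEq => h ((stubEquiv m).injective hEq)

lemma edgeMat_eq (a c x y : Fin n) :
    (if c = x ∧ a = y then 1 else 0) + (if c = y ∧ a = x then 1 else 0)
      = edgeMat a c x y := by
  unfold edgeMat
  rw [add_comm]
  congr 1
  · exact if_congr (by tauto) rfl rfl
  · exact if_congr (by tauto) rfl rfl

lemma edgeMat_eq' (a c x y : Fin n) :
    (if a = x ∧ c = y then 1 else 0) + (if a = y ∧ c = x then 1 else 0)
      = edgeMat a c x y := by
  unfold edgeMat
  congr 1
  · exact if_congr (by tauto) rfl rfl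
  · exact if_congr (by tauto) rfl rfl

lemma stubAdj_split (ψ : Psi n m) (e : Fin m) (x y : Fin n) :
    stubAdj ψ x y = (∑ e' ∈ Finset.univ.erase e,
      ((if ψ (stub m e' 0) = x ∧ ψ (stub m e' 1) = y then 1 else 0) +
       (if ψ (stub m e' 0) = y ∧ ψ (stub m e' 1) = x then 1 else 0))) +
      ((if ψ (stub m e 0) = x ∧ ψ (stub m e 1) = y then 1 else 0) +
       (if ψ (stub m e 0) = y ∧ ψ (stub m e 1) = x then 1 else 0)) := by
  rw [stubAdj_eq]
  exact (Finset.sum_erase_add _ _ (Finset.mem_univ e)).symm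

lemma main_calc (ψ : Psi n m) (e : Fin m) (j : Fin 2) (v : Fin n) (x y : Fin n) :
    stubAdj (Function.update ψ (stub m e j) v) x y
      = reconnect (fun i j => stubAdj ψ i j) (ψ (other (stub m e j))) (ψ (stub m e j)) v x y := by
  have hupd_ne : ∀ (e' : Fin m) (j' j'' : Fin 2), e' ≠ e →
      Function.update ψ (stub m e j) v (stub m e' j') = ψ (stub m e' j') := by
    intro e' j' j'' he'
    exact Function.update_of_ne (stub_ne (by simp [he'])) _ _
  have hrest : ∀ (ph : Psi n m), (∀ e' ∈ Finset.univ.erase e, ∀ j' : Fin 2,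
        ph (stub m e' j') = ψ (stub m e' j')) →
      (∑ e' ∈ Finset.univ.erase e,
        ((if ph (stub m e' 0) = x ∧ ph (stub m e' 1) = y then 1 else 0) +
         (if ph (stub m e' 0) = y ∧ ph (stub m e' 1) = x then 1 else 0)))
      = ∑ e' ∈ Finset.univ.erase e,
        ((if ψ (stub m e' 0) = x ∧ ψ (stub m e' 1) = y then 1 else 0) +
         (if ψ (stub m e' 0) = y ∧ ψ (stub m e' 1) = x then 1 else 0)) := by
    intro ph hph
    refine Finset.sum_congr rfl fun e' he' => ?_
    rw [hph e' he' 0, hph e' he' 1]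
  simp only [reconnect]
  fin_cases j
  · -- j = 0
    beta_reduce
    rw [show (⟨0, by omega⟩ : Fin 2) = 0 from rfl]
    have h10 : stub m e 1 ≠ stub m e 0 := stub_ne (by simp)
    have u0 : Function.update ψ (stub m e 0) v (stub m e 0) = v :=
      Function.update_self _ _ _
    have u1 : Function.update ψ (stub m e 0) v (stub m e 1) = ψ (stub m e 1) :=
      Function.update_of_ne h10 _ _
    rw [other_stub0]
    rw [stubAdj_split (Function.update ψ (stub m e 0) v) e,
      stubAdj_split ψ e,
      hrest _ (fun e' he' j' => Function.update_of_ne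
        (stub_ne (by simp [(Finset.mem_erase.mp he').1])) _ _),
      u0, u1, edgeMat_eq (ψ (stub m e 1)) v, edgeMat_eq (ψ (stub m e 1)) (ψ (stub m e 0))]
    omega
  · -- j = 1
    beta_reduce
    rw [show (⟨1, by omega⟩ : Fin 2) = 1 from rfl]
    have h01 : stub m e 0 ≠ stub m e 1 := stub_ne (by simp)
    have u1 : Function.update ψ (stub m e 1) v (stub m e 1) = v :=
      Function.update_self _ _ _
    have u0 : Function.update ψ (stub m e 1) v (stub m e 0) = ψ (stub m e 0) :=
      Function.update_of_ne h01 _ _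
    rw [other_stub1]
    rw [stubAdj_split (Function.update ψ (stub m e 1) v) e,
      stubAdj_split ψ e,
      hrest _ (fun e' he' j' => Function.update_of_ne
        (stub_ne (by simp [(Finset.mem_erase.mp he').1])) _ _),
      u0, u1, edgeMat_eq' (ψ (stub m e 0)) v, edgeMat_eq' (ψ (stub m e 0)) (ψ (stub m e 1))]
    omega

lemma stubAdj_update (ψ : Psi n m) (l : Fin (2 * m)) (v : Fin n) :
    (fun i j => stubAdj (Function.update ψ l v) i j)
      = reconnect (fun i j => stubAdj ψ i j) (ψ (other l)) (ψ l) v := by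
  funext x y
  obtain ⟨⟨e, j⟩, rfl⟩ := (stubEquiv m).surjective l
  exact main_calc ψ e j v x y

noncomputable def wfun (κ : ℝ) (n m : ℕ) (d : Fin n → ℕ) (v : Fin n) : ℝ :=
  (1 / (2 * (m : ℝ))) * (((d v : ℝ) + κ) / (2 * m + n * κ))

noncomputable def kk (κ : ℝ) {n m : ℕ} (ψ ψ' : Psi n m) : ℝ :=
  ∑ l, ∑ v, wfun κ n m (colorCount ψ) v * (if ψ' = Function.update ψ l v then 1 else 0)

lemma kernel_lift (κ : ℝ) (ψ : Psi n m) (B' : Fin n → Fin n → ℕ) :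
    reconnectKernel κ n m (fun i j => stubAdj ψ i j) B'
      = ∑ ψ' : Psi n m,
          (if (fun i j => stubAdj ψ' i j) = B' then 1 else 0) * kk κ ψ ψ' := by
  have collapse : ∀ (c : Psi n m) (r : ℝ),
      (∑ ψ' : Psi n m, (if (fun i j => stubAdj ψ' i j) = B' then 1 else 0) *
        (r * (if ψ' = c then 1 else 0)))
      = r * (if (fun i j => stubAdj c i j) = B' then 1 else 0) := by
    intro c r
    rw [Finset.sum_eq_single c]
    · simp [mul_comm]
    · intro ψ' _ hne; simp [hne]
    · simp
  have hRHS : (∑ ψ' : Psi n m,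
        (if (fun i j => stubAdj ψ' i j) = B' then 1 else 0) * kk κ ψ ψ')
      = ∑ l, ∑ v, wfun κ n m (colorCount ψ) v *
          (if (fun i j => stubAdj (Function.update ψ l v) i j) = B' then 1 else 0) := by
    unfold kk
    calc (∑ ψ' : Psi n m, (if (fun i j => stubAdj ψ' i j) = B' then 1 else 0) *
            ∑ l, ∑ v, wfun κ n m (colorCount ψ) v * (if ψ' = Function.update ψ l v then 1 else 0))
        = ∑ ψ' : Psi n m, ∑ l, ∑ v, (if (fun i j => stubAdj ψ' i j) = B' then 1 else 0) *
            (wfun κ n m (colorCount ψ) v * (if ψ' = Function.update ψ l v then 1 else 0)) := by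
          refine Finset.sum_congr rfl fun ψ' _ => ?_
          rw [Finset.mul_sum]
          exact Finset.sum_congr rfl fun l _ => by rw [Finset.mul_sum]
      _ = ∑ l, ∑ ψ' : Psi n m, ∑ v, (if (fun i j => stubAdj ψ' i j) = B' then 1 else 0) *
            (wfun κ n m (colorCount ψ) v * (if ψ' = Function.update ψ l v then 1 else 0)) :=
          Finset.sum_comm
      _ = ∑ l, ∑ v, ∑ ψ' : Psi n m, (if (fun i j => stubAdj ψ' i j) = B' then 1 else 0) *
            (wfun κ n m (colorCount ψ) v * (if ψ' = Function.update ψ l v then 1 else 0)) :=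
          Finset.sum_congr rfl fun l _ => Finset.sum_comm
      _ = ∑ l, ∑ v, wfun κ n m (colorCount ψ) v *
            (if (fun i j => stubAdj (Function.update ψ l v) i j) = B' then 1 else 0) :=
          Finset.sum_congr rfl fun l _ => Finset.sum_congr rfl fun v _ => collapse _ _
  rw [hRHS]
  unfold reconnectKernel
  have step1 : ∀ a b : Fin n, (∑ v : Fin n,
        ((stubAdj ψ a b : ℝ) / (2 * m)) *
          (((degB (fun i j => stubAdj ψ i j) v : ℝ) + κ) / (2 * m + n * κ)) *
          (if B' = reconnect (fun i j => stubAdj ψ i j) a b v then 1 else 0))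
      = (stubAdj ψ a b : ℝ) * ∑ v : Fin n, wfun κ n m (colorCount ψ) v *
          (if B' = reconnect (fun i j => stubAdj ψ i j) a b v then 1 else 0) := by
    intro a b
    rw [Finset.mul_sum]
    refine Finset.sum_congr rfl fun v _ => ?_
    rw [degB_stubAdj, wfun]
    ring
  rw [Finset.sum_congr rfl fun a _ => Finset.sum_congr rfl fun b _ => step1 a b]
  rw [sum_stubAdj_mul ψ (fun a b => ∑ v : Fin n, wfun κ n m (colorCount ψ) v *
        (if B' = reconnect (fun i j => stubAdj ψ i j) a b v then 1 else 0))]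
  refine Finset.sum_congr rfl fun l _ => Finset.sum_congr rfl fun v _ => ?_
  rw [← stubAdj_update ψ l v]
  exact congrArg _ (if_congr eq_comm rfl rfl)

lemma colorCount_update_add (ψ : Psi n m) (l : Fin (2 * m)) (w : Fin n) (i : Fin n) :
    colorCount (Function.update ψ l w) i + (if ψ l = i then 1 else 0)
      = colorCount ψ i + (if w = i then 1 else 0) := by
  rw [colorCount_eq, colorCount_eq,
    ← Finset.sum_erase_add _ _ (Finset.mem_univ l),
    ← Finset.sum_erase_add _ (fun l' => if ψ l' = i then 1 else 0) (Finset.mem_univ l)]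
  have hcg : ∀ l' ∈ Finset.univ.erase l,
      (if Function.update ψ l w l' = i then 1 else 0) = (if ψ l' = i then 1 else 0) :=
    fun l' hl' => by rw [Function.update_of_ne (Finset.mem_erase.mp hl').1]
  rw [Finset.sum_congr rfl hcg, Function.update_self]
  omega

def D {n : ℕ} (d : Fin n → ℕ) (a b : Fin n) : Fin n → ℕ :=
  fun i => d i + (if b = i then 1 else 0) - (if a = i then 1 else 0)

lemma colorCount_update (ψ : Psi n m) (l : Fin (2 * m)) (w : Fin n) :
    colorCount (Function.update ψ l w) = D (colorCount ψ) (ψ l) w := by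
  funext i
  have h := colorCount_update_add ψ l w i
  unfold D
  split_ifs at h ⊢ <;> omega

lemma P_lemma {ψ ψ' : Psi n m} {l : Fin (2 * m)} {v w : Fin n}
    (h1 : ψ l = w) (h2 : ψ' = Function.update ψ l v) :
    ψ' l = v ∧ ψ = Function.update ψ' l w := by
  constructor
  · rw [h2, Function.update_self]
  · funext i
    by_cases hi : i = l
    · subst hi; rw [Function.update_self, h1]
    · rw [Function.update_of_ne hi, h2, Function.update_of_ne hi]

lemma C1 (H : Psi n m → ℝ) (l : Fin (2 * m)) (v : Fin n) (ψ' : Psi n m) :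
    ∑ ψ : Psi n m, H ψ * (if ψ' = Function.update ψ l v then 1 else 0)
      = (if ψ' l = v then 1 else 0) * ∑ w, H (Function.update ψ' l w) := by
  by_cases hv : ψ' l = v
  · rw [if_pos hv, one_mul]
    have himg : Finset.univ.filter (fun ψ : Psi n m => ψ' = Function.update ψ l v)
        = Finset.image (fun w => Function.update ψ' l w) Finset.univ := by
      ext ψ
      simp only [Finset.mem_filter, Finset.mem_univ, true_and, Finset.mem_image]
      constructor
      · intro h2
        exact ⟨ψ l, ((P_lemma rfl h2).2).symm⟩
      · rintro ⟨w, rfl⟩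
        exact (P_lemma hv rfl).2
    calc ∑ ψ : Psi n m, H ψ * (if ψ' = Function.update ψ l v then 1 else 0)
        = ∑ ψ : Psi n m, (if ψ' = Function.update ψ l v then H ψ else 0) :=
          Finset.sum_congr rfl fun ψ _ => by split_ifs <;> simp
      _ = ∑ ψ ∈ Finset.univ.filter (fun ψ : Psi n m => ψ' = Function.update ψ l v), H ψ :=
          (Finset.sum_filter _ _).symm
      _ = ∑ ψ ∈ Finset.image (fun w => Function.update ψ' l w) Finset.univ, H ψ := by
          rw [himg]
      _ = ∑ w, H (Function.update ψ' l w) :=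
          Finset.sum_image (fun w₁ _ w₂ _ h => by
            have := congrFun h l
            simpa using this)
  · rw [if_neg hv, zero_mul]
    apply Finset.sum_eq_zero
    intro ψ _
    rw [if_neg (fun h2 => hv (P_lemma rfl h2).1), mul_zero]

noncomputable def Sd (n m : ℕ) (p : (Fin n → Fin n → ℕ) → ℝ) (d : Fin n → ℕ) : ℝ :=
  ∑ B' ∈ (stateSpace n m).filter (fun B' => ∀ i, degB B' i = d i), p B'

def Nd (n m : ℕ) (d : Fin n → ℕ) : ℕ :=
  (Finset.univ.filter fun ψ : Psi n m => ∀ i, colorCount ψ i = d i).card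

noncomputable def Fq (n m : ℕ) (p : (Fin n → Fin n → ℕ) → ℝ) (d : Fin n → ℕ) : ℝ :=
  Sd n m p d / Nd n m d

noncomputable def q (n m : ℕ) (p : (Fin n → Fin n → ℕ) → ℝ) (ψ : Psi n m) : ℝ :=
  Fq n m p (colorCount ψ)

noncomputable def q' (κ : ℝ) (n m : ℕ) (p : (Fin n → Fin n → ℕ) → ℝ) (ψ' : Psi n m) : ℝ :=
  ∑ ψ : Psi n m, q n m p ψ * kk κ ψ ψ'

noncomputable def gfun (κ : ℝ) (n m : ℕ) (p : (Fin n → Fin n → ℕ) → ℝ)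
    (d : Fin n → ℕ) (a : Fin n) : ℝ :=
  ∑ w : Fin n, Fq n m p (D d a w) * wfun κ n m (D d a w) a

noncomputable def Fp' (κ : ℝ) (n m : ℕ) (p : (Fin n → Fin n → ℕ) → ℝ) (d : Fin n → ℕ) : ℝ :=
  ∑ a, (d a : ℝ) * gfun κ n m p d a

lemma count_sum (ψ' : Psi n m) (g : Fin n → ℝ) :
    ∑ l, g (ψ' l) = ∑ a, (colorCount ψ' a : ℝ) * g a := by
  have key : ∀ l : Fin (2 * m), g (ψ' l) = ∑ a, (if ψ' l = a then g a else 0) := by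
    intro l; simp
  rw [show (∑ l, g (ψ' l)) = ∑ l : Fin (2 * m), ∑ a, (if ψ' l = a then g a else 0)
    from Finset.sum_congr rfl fun l _ => key l]
  rw [Finset.sum_comm]
  refine Finset.sum_congr rfl fun a _ => ?_
  rw [colorCount_eq]
  push_cast
  rw [Finset.sum_mul]
  refine Finset.sum_congr rfl fun l _ => ?_
  split_ifs <;> simp

lemma q'_count (κ : ℝ) (p : (Fin n → Fin n → ℕ) → ℝ) (ψ' : Psi n m) :
    q' κ n m p ψ' = Fp' κ n m p (colorCount ψ') := by
  unfold q' kk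
  calc (∑ ψ : Psi n m, q n m p ψ *
          ∑ l, ∑ v, wfun κ n m (colorCount ψ) v * (if ψ' = Function.update ψ l v then 1 else 0))
      = ∑ ψ : Psi n m, ∑ l, ∑ v, (q n m p ψ * wfun κ n m (colorCount ψ) v) *
          (if ψ' = Function.update ψ l v then 1 else 0) := by
        refine Finset.sum_congr rfl fun ψ _ => ?_
        rw [Finset.mul_sum]
        refine Finset.sum_congr rfl fun l _ => ?_
        rw [Finset.mul_sum]
        exact Finset.sum_congr rfl fun v _ => by ring
    _ = ∑ l, ∑ ψ : Psi n m, ∑ v, (q n m p ψ * wfun κ n m (colorCount ψ) v) *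
          (if ψ' = Function.update ψ l v then 1 else 0) := Finset.sum_comm
    _ = ∑ l, ∑ v, ∑ ψ : Psi n m, (q n m p ψ * wfun κ n m (colorCount ψ) v) *
          (if ψ' = Function.update ψ l v then 1 else 0) :=
        Finset.sum_congr rfl fun l _ => Finset.sum_comm
    _ = ∑ l, ∑ v, (if ψ' l = v then 1 else 0) *
          ∑ w, (q n m p (Function.update ψ' l w) *
            wfun κ n m (colorCount (Function.update ψ' l w)) v) :=
        Finset.sum_congr rfl fun l _ => Finset.sum_congr rfl fun v _ =>
          C1 (fun ψ => q n m p ψ * wfun κ n m (colorCount ψ) v) l v ψ'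
    _ = ∑ l, ∑ w, q n m p (Function.update ψ' l w) *
          wfun κ n m (colorCount (Function.update ψ' l w)) (ψ' l) := by
        refine Finset.sum_congr rfl fun l _ => ?_
        rw [show (∑ v, (if ψ' l = v then 1 else 0) *
            ∑ w, (q n m p (Function.update ψ' l w) *
              wfun κ n m (colorCount (Function.update ψ' l w)) v))
          = ∑ v, (if ψ' l = v then (∑ w, (q n m p (Function.update ψ' l w) *
              wfun κ n m (colorCount (Function.update ψ' l w)) v)) else 0)
          from Finset.sum_congr rfl fun v _ => by split_ifs <;> simp]
        simp
    _ = ∑ l, gfun κ n m p (colorCount ψ') (ψ' l) := by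
        refine Finset.sum_congr rfl fun l _ => ?_
        unfold gfun
        refine Finset.sum_congr rfl fun w _ => ?_
        rw [colorCount_update, q, colorCount_update]
    _ = Fp' κ n m p (colorCount ψ') := by
        rw [count_sum ψ' (gfun κ n m p (colorCount ψ'))]
        rfl

end ER

open ER

/-- If the edge reconnecting Markov chain with parameter `κ > 0` is
started from an edge stationary distribution on `A_n^m`, then the distribution after one
step (hence at every later time) is again edge stationary. -/
theorem edge_reconnecting_preserves_edge_stationarity (κ : ℝ) (hκ : 0 < κ)
    (n m : ℕ) (hn : 0 < n) (hm : 0 < m)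
    (p : (Fin n → Fin n → ℕ) → ℝ)
    (hp : ∀ B, 0 ≤ p B) (hsum : ∑ B ∈ stateSpace n m, p B = 1)
    (hstat : edgeStationary n m p) :
    edgeStationary n m
      (fun B' => ∑ B ∈ stateSpace n m, p B * reconnectKernel κ n m B B') := by
  intro B hB
  classical
  have hmem : ∀ ψ : Psi n m, (fun i j => stubAdj ψ i j) ∈ stateSpace n m :=
    fun ψ => Finset.mem_image_of_mem _ (Finset.mem_univ ψ)
  have hfib_cc : ∀ (B0 : Fin n → Fin n → ℕ) (ψ : Psi n m),
      (fun i j => stubAdj ψ i j) = B0 → ∀ i, colorCount ψ i = degB B0 i := by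
    intro B0 ψ h i
    exact (degB_stubAdj ψ i).symm.trans (by rw [h])
  have hNpos : ∀ B0 ∈ stateSpace n m,
      0 < (Finset.univ.filter (fun ψ : Psi n m => ∀ i, colorCount ψ i = degB B0 i)).card := by
    intro B0 hB0
    obtain ⟨ψ, -, hψ⟩ := Finset.mem_image.mp hB0
    exact Finset.card_pos.mpr ⟨ψ, Finset.mem_filter.mpr ⟨Finset.mem_univ ψ, hfib_cc B0 ψ hψ⟩⟩
  have hNd : ∀ B0 : Fin n → Fin n → ℕ, Nd n m (fun i => degB B0 i)
      = (Finset.univ.filter (fun ψ : Psi n m => ∀ i, colorCount ψ i = degB B0 i)).card := fun _ => rfl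
  have hSd : ∀ B0 : Fin n → Fin n → ℕ, Sd n m p (fun i => degB B0 i)
      = ∑ B' ∈ (stateSpace n m).filter (fun B' => ∀ i, degB B' i = degB B0 i), p B' :=
    fun _ => rfl
  have hq_fiber : ∀ B0 ∈ stateSpace n m,
      ∑ ψ ∈ Finset.univ.filter (fun ψ : Psi n m => (fun i j => stubAdj ψ i j) = B0),
        q n m p ψ = p B0 := by
    intro B0 hB0
    have hcongr : ∀ ψ ∈ Finset.univ.filter
        (fun ψ : Psi n m => (fun i j => stubAdj ψ i j) = B0),
        q n m p ψ = Fq n m p (fun i => degB B0 i) := by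
      intro ψ hψ
      unfold q
      congr 1
      funext i
      exact hfib_cc B0 ψ (Finset.mem_filter.mp hψ).2 i
    rw [Finset.sum_congr rfl hcongr, Finset.sum_const, nsmul_eq_mul]
    have hst := hstat B0 hB0
    unfold Fq
    rw [hSd B0, hNd B0]
    have hN0 : ((Finset.univ.filter
        (fun ψ : Psi n m => ∀ i, colorCount ψ i = degB B0 i)).card : ℝ) ≠ 0 := by
      exact_mod_cast (hNpos B0 hB0).ne'
    field_simp
    linarith [hst]
  have hp' : ∀ B0 : Fin n → Fin n → ℕ,
      (∑ B1 ∈ stateSpace n m, p B1 * reconnectKernel κ n m B1 B0)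
        = ∑ ψ' ∈ Finset.univ.filter
            (fun ψ' : Psi n m => (fun i j => stubAdj ψ' i j) = B0),
            q' κ n m p ψ' := by
    intro B0
    calc ∑ B1 ∈ stateSpace n m, p B1 * reconnectKernel κ n m B1 B0
        = ∑ B1 ∈ stateSpace n m, ∑ ψ ∈ Finset.univ.filter
            (fun ψ : Psi n m => (fun i j => stubAdj ψ i j) = B1),
            q n m p ψ * reconnectKernel κ n m (fun i j => stubAdj ψ i j) B0 := by
          refine Finset.sum_congr rfl fun B1 hB1 => ?_
          rw [← hq_fiber B1 hB1, Finset.sum_mul]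
          refine Finset.sum_congr rfl fun ψ hψ => ?_
          rw [(Finset.mem_filter.mp hψ).2]
      _ = ∑ ψ : Psi n m, q n m p ψ * reconnectKernel κ n m (fun i j => stubAdj ψ i j) B0 :=
          Finset.sum_fiberwise_of_maps_to (fun ψ _ => hmem ψ) _
      _ = ∑ ψ : Psi n m, ∑ ψ' : Psi n m, q n m p ψ *
            ((if (fun i j => stubAdj ψ' i j) = B0 then 1 else 0) * kk κ ψ ψ') := by
          refine Finset.sum_congr rfl fun ψ _ => ?_
          rw [kernel_lift κ ψ B0, Finset.mul_sum]
      _ = ∑ ψ' : Psi n m, (if (fun i j => stubAdj ψ' i j) = B0 then 1 else 0) *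
            ∑ ψ : Psi n m, q n m p ψ * kk κ ψ ψ' := by
          rw [Finset.sum_comm]
          refine Finset.sum_congr rfl fun ψ' _ => ?_
          rw [Finset.mul_sum]
          exact Finset.sum_congr rfl fun ψ _ => by ring
      _ = ∑ ψ' ∈ Finset.univ.filter
            (fun ψ' : Psi n m => (fun i j => stubAdj ψ' i j) = B0), q' κ n m p ψ' := by
          rw [Finset.sum_filter]
          refine Finset.sum_congr rfl fun ψ' _ => ?_
          unfold q'
          split_ifs <;> simp
  have hp'val : ∀ B0 ∈ stateSpace n m,
      (∑ B1 ∈ stateSpace n m, p B1 * reconnectKernel κ n m B1 B0)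
        = ((Finset.univ.filter
            (fun ψ : Psi n m => (fun i j => stubAdj ψ i j) = B0)).card : ℝ)
            * Fp' κ n m p (fun i => degB B0 i) := by
    intro B0 hB0
    rw [hp' B0]
    have hcg : ∀ ψ' ∈ Finset.univ.filter
        (fun ψ' : Psi n m => (fun i j => stubAdj ψ' i j) = B0),
        q' κ n m p ψ' = Fp' κ n m p (fun i => degB B0 i) := by
      intro ψ' hψ'
      rw [q'_count]
      congr 1
      funext i
      exact hfib_cc B0 ψ' (Finset.mem_filter.mp hψ').2 i
    rw [Finset.sum_congr rfl hcg, Finset.sum_const, nsmul_eq_mul]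
  have hmaps : ∀ ψ ∈ Finset.univ.filter
      (fun ψ : Psi n m => ∀ i, colorCount ψ i = degB B i),
      (fun i j => stubAdj ψ i j) ∈ (stateSpace n m).filter
        (fun B' => ∀ i, degB B' i = degB B i) := by
    intro ψ hψ
    refine Finset.mem_filter.mpr ⟨hmem ψ, fun i => ?_⟩
    rw [degB_stubAdj ψ i]
    exact (Finset.mem_filter.mp hψ).2 i
  have hNat : (Finset.univ.filter
      (fun ψ : Psi n m => ∀ i, colorCount ψ i = degB B i)).card
      = ∑ B' ∈ (stateSpace n m).filter (fun B' => ∀ i, degB B' i = degB B i),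
          (Finset.univ.filter
            (fun ψ : Psi n m => (fun i j => stubAdj ψ i j) = B')).card := by
    rw [Finset.card_eq_sum_card_fiberwise hmaps]
    refine Finset.sum_congr rfl fun B' hB' => ?_
    congr 1
    ext ψ
    simp only [Finset.mem_filter, Finset.mem_univ, true_and]
    constructor
    · exact fun h => h.2
    · intro h
      refine ⟨fun i => ?_, h⟩
      rw [hfib_cc B' ψ h i]
      exact (Finset.mem_filter.mp hB').2 i
  have hNatR : ((Finset.univ.filter
      (fun ψ : Psi n m => ∀ i, colorCount ψ i = degB B i)).card : ℝ)
      = ∑ B' ∈ (stateSpace n m).filter (fun B' => ∀ i, degB B' i = degB B i),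
          ((Finset.univ.filter
            (fun ψ : Psi n m => (fun i j => stubAdj ψ i j) = B')).card : ℝ) := by
    rw [hNat]
    push_cast
    rfl
  beta_reduce
  rw [hp'val B hB]
  have hsum' : (∑ B' ∈ (stateSpace n m).filter (fun B' => ∀ i, degB B' i = degB B i),
      ∑ B1 ∈ stateSpace n m, p B1 * reconnectKernel κ n m B1 B')
      = ((Finset.univ.filter
          (fun ψ : Psi n m => ∀ i, colorCount ψ i = degB B i)).card : ℝ)
          * Fp' κ n m p (fun i => degB B i) := by
    have hcg : ∀ B' ∈ (stateSpace n m).filter (fun B' => ∀ i, degB B' i = degB B i),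
        (∑ B1 ∈ stateSpace n m, p B1 * reconnectKernel κ n m B1 B')
        = ((Finset.univ.filter
            (fun ψ : Psi n m => (fun i j => stubAdj ψ i j) = B')).card : ℝ)
            * Fp' κ n m p (fun i => degB B i) := by
      intro B' hB'
      rw [hp'val B' (Finset.mem_filter.mp hB').1]
      congr 2
      funext i
      exact (Finset.mem_filter.mp hB').2 i
    rw [Finset.sum_congr rfl hcg, ← Finset.sum_mul, ← hNatR]
  rw [hsum']
  ring
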